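/- Every long-refinement graph on at least 2 vertices is connected. -/

import Mathlib

variable {V : Type*}

/-- Colour Refinement equivalence: `crRel G i u v` means `u` and `v` get the same colour
after `i` iterations of Colour Refinement on `G` (starting monochromatic). -/
def crRel (G : SimpleGraph V) : ℕ → V → V → Prop
  | 0 => fun _ _ => True
  | (i+1) => fun u v => crRel G i u v ∧ ∀ w : V,
      Nat.card {x : V // G.Adj u x ∧ crRel G i x w} =
      Nat.card {x : V // G.Adj v x ∧ crRel G i x w}

/-- The colour class of `v` after `i` iterations. -/
def crClass (G : SimpleGraph V) (i : ℕ) (v : V) : Set V :=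
  {u : V | crRel G i u v}

/-- The partition `π^i` induced by the colouring after `i` iterations. -/
def crPartition (G : SimpleGraph V) (i : ℕ) : Set (Set V) :=
  {C : Set V | ∃ v : V, C = crClass G i v}

/-- `G` is a long-refinement graph: Colour Refinement takes exactly `n - 1` iterations
to stabilise. -/
def IsLongRefinement [Fintype V] (G : SimpleGraph V) : Prop :=
  (∀ i < Fintype.card V - 1, crPartition G (i+1) ≠ crPartition G i) ∧
  crPartition G (Fintype.card V) = crPartition G (Fintype.card V - 1)

/-- The degree of a vertex. -/
noncomputable def vdeg (G : SimpleGraph V) (v : V) : ℕ :=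
  Nat.card {u : V // G.Adj v u}

/-- `degOn G C C' k` : every vertex of `C` has exactly `k` neighbours in `C'`,
i.e. `deg_{C'}(C) = k`. -/
def degOn (G : SimpleGraph V) (C C' : Set V) (k : ℕ) : Prop :=
  ∀ v ∈ C, Nat.card {x : V // x ∈ C' ∧ G.Adj v x} = k

/-- `C` is balanced with respect to `C'`: `deg_{C'}(C)` is defined. -/
def BalancedWrt (G : SimpleGraph V) (C C' : Set V) : Prop :=
  ∃ k, degOn G C C' k

/-!
Suppose `G` is disconnected, write `n = |V|`, and let `A` be a union of components with
`1 ≤ |A| ≤ |Aᶜ|`. Colour refinement inside `A` runs autonomously, so it refines `A` at most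
`|A| - 1` times, and since it ends discrete, `A` is discrete after `|A| - 1` rounds; likewise `Aᶜ`
after `T = |Aᶜ| - 1` rounds. From round `T` on, every colour class is a singleton or a pair
`{a, b}` with `a ∈ A`, `b ∉ A`, and there are `n - 1 - i` pairs in round `i`, so each of the last
`|A|` rounds splits exactly one pair. The pair split in a round can only be separated through the
pair split just before it; this forces `A` to induce a path, listed in the order of the splits.
If `|A| ≥ 2`, reversing that path is an automorphism of `G` moving one end to the other, and
colour refinement never separates a vertex from its image under an automorphism. If `|A| = 1`,
the isolated vertex of `A` is paired in round `T` with a vertex of the same degree, another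
isolated vertex, and two isolated vertices are never separated either.
-/

open Function

section ColourRefinement

variable {G : SimpleGraph V} {i j : ℕ} {u v w x y : V}

theorem crRel_equivalence (G : SimpleGraph V) : ∀ i, Equivalence (crRel G i)
  | 0 => ⟨fun _ => trivial, fun _ => trivial, fun _ _ => trivial⟩
  | i + 1 =>
    have h := crRel_equivalence G i
    ⟨fun x => ⟨h.refl x, fun _ => rfl⟩, fun ⟨h₁, h₂⟩ => ⟨h.symm h₁, fun w => (h₂ w).symm⟩,
      fun ⟨h₁, h₂⟩ ⟨h₃, h₄⟩ => ⟨h.trans h₁ h₃, fun w => (h₂ w).trans (h₄ w)⟩⟩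

theorem crRel_refl (G : SimpleGraph V) (i : ℕ) (u : V) : crRel G i u u :=
  (crRel_equivalence G i).refl u

theorem crRel.symm (h : crRel G i u v) : crRel G i v u := (crRel_equivalence G i).symm h

theorem crRel.trans (h : crRel G i u v) (h' : crRel G i v w) : crRel G i u w :=
  (crRel_equivalence G i).trans h h'

theorem crRel.of_le (h : crRel G j u v) (hij : i ≤ j) : crRel G i u v := by
  induction hij with
  | refl => exact h
  | step _ ih => exact ih h.1

def crSetoid (G : SimpleGraph V) (i : ℕ) : Setoid V := ⟨crRel G i, crRel_equivalence G i⟩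

theorem crSetoid_antitone (G : SimpleGraph V) : Antitone (crSetoid G) :=
  fun _ _ hij _ _ h => crRel.of_le h hij

noncomputable def nbrCount (G : SimpleGraph V) (i : ℕ) (u w : V) : ℕ :=
  Nat.card {x : V // G.Adj u x ∧ crRel G i x w}

theorem crRel_succ_iff :
    crRel G (i + 1) u v ↔ crRel G i u v ∧ ∀ w, nbrCount G i u w = nbrCount G i v w :=
  Iff.rfl

theorem nbrCount_congr {w' : V} (h : ∀ x, crRel G i x w ↔ crRel G j x w') :
    nbrCount G i u w = nbrCount G j u w' :=
  Nat.card_congr (Equiv.subtypeEquivRight fun x => and_congr_right' (h x))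

open scoped Classical in
theorem nbrCount_eq_ite {a : V} (h : ∀ x, G.Adj u x → (crRel G i x w ↔ x = a)) :
    nbrCount G i u w = if G.Adj u a then 1 else 0 := by
  split_ifs with ha
  · exact Nat.card_eq_one_iff_exists.2
      ⟨⟨a, ha, (h a ha).2 rfl⟩, fun ⟨x, hx, hxw⟩ => Subtype.ext ((h x hx).1 hxw)⟩
  · exact Nat.card_eq_zero.2 (Or.inl ⟨fun ⟨x, hx, hxw⟩ => ha ((h x hx).1 hxw ▸ hx)⟩)

theorem nbrCount_eq_zero_of_isolated (hu : ∀ z, ¬ G.Adj u z) : nbrCount G i u w = 0 :=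
  Nat.card_eq_zero.2 (Or.inl ⟨fun ⟨z, hz, _⟩ => hu z hz⟩)

theorem crRel_of_isolated (hx : ∀ z, ¬ G.Adj x z) (hy : ∀ z, ¬ G.Adj y z) :
    ∀ i, crRel G i x y
  | 0 => trivial
  | i + 1 => crRel_succ_iff.2 ⟨crRel_of_isolated hx hy i, fun _ => by
      rw [nbrCount_eq_zero_of_isolated hx, nbrCount_eq_zero_of_isolated hy]⟩

theorem isolated_of_crRel_one [Finite V] (hx : ∀ z, ¬ G.Adj x z) (h : crRel G 1 x y) :
    ∀ z, ¬ G.Adj y z := by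
  intro z hz
  have : Nonempty {t // G.Adj y t ∧ crRel G 0 t x} := ⟨⟨z, hz, trivial⟩⟩
  have hpos : 0 < nbrCount G 0 y x := Nat.card_pos
  rw [← (crRel_succ_iff.1 h).2 x, nbrCount_eq_zero_of_isolated hx] at hpos
  exact hpos.false

theorem crRel_apply_self (σ : G ≃g G) : ∀ i u, crRel G i (σ u) u
  | 0, _ => trivial
  | i + 1, u => ⟨crRel_apply_self σ i u, fun _ => Nat.card_congr <| Equiv.symm <|
      σ.toEquiv.subtypeEquiv fun x => and_congr σ.map_adj_iff.symm
        ⟨fun h => (crRel_apply_self σ i x).trans h, fun h => (crRel_apply_self σ i x).symm.trans h⟩⟩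

theorem card_quotient_crSetoid_zero [Nonempty V] (G : SimpleGraph V) :
    Nat.card (Quotient (crSetoid G 0)) = 1 :=
  Nat.card_eq_one_iff_unique.2
    ⟨⟨fun a b => Quotient.inductionOn₂ a b fun _ _ => Quotient.sound trivial⟩,
      ⟨Quotient.mk _ (Classical.arbitrary V)⟩⟩

end ColourRefinement

namespace Setoid

variable {α : Type*} {s t : Setoid α}

theorem map_of_le_surjective (h : s ≤ t) : Surjective (map_of_le h) :=
  fun q => q.inductionOn fun x => ⟨Quotient.mk s x, rfl⟩

variable [Finite α]

theorem card_quotient_le_of_le (h : s ≤ t) : Nat.card (Quotient t) ≤ Nat.card (Quotient s) :=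
  Nat.card_le_card_of_surjective _ (map_of_le_surjective h)

theorem le_of_card_quotient_le (h : s ≤ t) (hc : Nat.card (Quotient s) ≤ Nat.card (Quotient t)) :
    t ≤ s := fun x y hxy =>
  Quotient.exact (((map_of_le_surjective h).bijective_of_nat_card_le hc).injective
    (Quotient.sound hxy : Quotient.mk t x = Quotient.mk t y))

theorem card_quotient_lt_of_lt (h : s < t) : Nat.card (Quotient t) < Nat.card (Quotient s) :=
  (card_quotient_le_of_le h.le).lt_of_ne fun hc => h.not_ge (le_of_card_quotient_le h.le hc.ge)

theorem eq_of_card_quotient_eq (hc : Nat.card (Quotient s) = Nat.card α) {x y : α} (h : s x y) :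
    x = y :=
  (Quotient.mk_surjective.bijective_of_nat_card_le hc.ge).injective (Quotient.sound h)

theorem card_quotient_add_le {r : ℕ → Setoid α} (hr : Antitone r) :
    ∀ {k}, (∀ j < k, r (j + 1) ≠ r j) → Nat.card (Quotient (r 0)) + k ≤ Nat.card (Quotient (r k))
  | 0, _ => le_rfl
  | k + 1, hne => by
    have h₁ := card_quotient_add_le hr fun j hj => hne j (hj.trans (Nat.lt_add_one k))
    have h₂ := card_quotient_lt_of_lt
      ((hr (Nat.le_add_right k 1)).lt_of_ne (hne k (Nat.lt_add_one k)))
    omega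

end Setoid

section LongRefinement

variable [Fintype V] {G : SimpleGraph V} {i : ℕ} {u v : V}

theorem IsLongRefinement.crSetoid_succ_ne (h : IsLongRefinement G)
    (hi : i < Fintype.card V - 1) : crSetoid G (i + 1) ≠ crSetoid G i := by
  intro heq
  have hrel : crRel G (i + 1) = crRel G i := congrArg (fun s : Setoid V => @Setoid.r V s) heq
  exact h.1 i hi (by simp only [crPartition, crClass, hrel])

theorem IsLongRefinement.card_quotient_crSetoid [Nonempty V] (h : IsLongRefinement G)
    (hi : i ≤ Fintype.card V - 1) : Nat.card (Quotient (crSetoid G i)) = i + 1 := by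
  have hlow := Setoid.card_quotient_add_le (crSetoid_antitone G) (k := i)
    fun j hj => h.crSetoid_succ_ne (by omega)
  have hup := Setoid.card_quotient_add_le (r := fun j => crSetoid G (i + j))
    (fun _ _ hab => crSetoid_antitone G (by omega)) (k := Fintype.card V - 1 - i)
    fun j hj => h.crSetoid_succ_ne (i := i + j) (by omega)
  have hle : Nat.card (Quotient (crSetoid G (Fintype.card V - 1))) ≤ Fintype.card V :=
    Nat.card_eq_fintype_card (α := V) ▸ Nat.card_le_card_of_surjective _ Quotient.mk_surjective
  rw [card_quotient_crSetoid_zero] at hlow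
  simp only [add_zero, show i + (Fintype.card V - 1 - i) = Fintype.card V - 1 by omega] at hup
  omega

theorem IsLongRefinement.eq_of_crRel [Nonempty V] (h : IsLongRefinement G)
    (huv : crRel G (Fintype.card V - 1) u v) : u = v :=
  Setoid.eq_of_card_quotient_eq (s := crSetoid G _)
    (by rw [h.card_quotient_crSetoid le_rfl, Nat.card_eq_fintype_card, Nat.sub_add_cancel
      Fintype.card_pos]) huv

end LongRefinement

section AdjClosed

def IsAdjClosed (G : SimpleGraph V) (A : Set V) : Prop :=
  ∀ ⦃x y⦄, x ∈ A → G.Adj x y → y ∈ A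

def CrDiscreteOn (G : SimpleGraph V) (i : ℕ) (A : Set V) : Prop :=
  ∀ ⦃x⦄, x ∈ A → ∀ ⦃y⦄, y ∈ A → crRel G i x y → x = y

variable {G : SimpleGraph V} {A : Set V} {i j k : ℕ} {u x y z w : V}

theorem IsAdjClosed.compl (hA : IsAdjClosed G A) : IsAdjClosed G Aᶜ :=
  fun _ _ hx hxy hy => hx (hA hy hxy.symm)

theorem IsAdjClosed.not_adj (hA : IsAdjClosed G A) (hx : x ∈ A) (hy : y ∉ A) : ¬ G.Adj x y :=
  fun h => hy (hA hx h)

theorem isAdjClosed_setOf_reachable (G : SimpleGraph V) (x : V) :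
    IsAdjClosed G {y | G.Reachable x y} :=
  fun _ _ hy hyz => hy.trans hyz.reachable

theorem exists_isAdjClosed_ncard_le_compl (hxy : ¬ G.Reachable x y) :
    ∃ A : Set V, IsAdjClosed G A ∧ A.Nonempty ∧ A.ncard ≤ Aᶜ.ncard := by
  rcases le_total {z | G.Reachable x z}.ncard {z | G.Reachable x z}ᶜ.ncard with hle | hle
  · exact ⟨_, isAdjClosed_setOf_reachable G x, ⟨x, .refl x⟩, hle⟩
  · exact ⟨_, (isAdjClosed_setOf_reachable G x).compl, ⟨y, hxy⟩, by rwa [compl_compl]⟩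

theorem IsAdjClosed.isolated_of_eq_singleton (hA : IsAdjClosed G {x}) : ∀ z, ¬ G.Adj x z :=
  fun _ hz => G.ne_of_adj hz (Set.mem_singleton_iff.1 (hA rfl hz)).symm

theorem CrDiscreteOn.mono (h : CrDiscreteOn G i A) (hij : i ≤ j) : CrDiscreteOn G j A :=
  fun _ hx _ hy hxy => h hx hy (hxy.of_le hij)

theorem nbrCount_eq_of_agreeOn (hA : IsAdjClosed G A)
    (hij : ∀ x ∈ A, ∀ y ∈ A, crRel G i x y ↔ crRel G j x y) (hu : u ∈ A) (hz : z ∈ A) :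
    nbrCount G i u z = nbrCount G j u z :=
  Nat.card_congr (Equiv.subtypeEquivRight fun x =>
    and_congr_right fun hx => hij x (hA hu hx) z hz)

theorem nbrCount_eq_zero_of_isAdjClosed (hA : IsAdjClosed G A) (hu : u ∈ A)
    (hw : ∀ z ∈ A, ¬ crRel G i z w) : nbrCount G i u w = 0 :=
  Nat.card_eq_zero.2 (Or.inl ⟨fun ⟨z, hz, hzw⟩ => hw z (hA hu hz) hzw⟩)

theorem forall_nbrCount_eq_of_agreeOn (hA : IsAdjClosed G A)
    (hij : ∀ x ∈ A, ∀ y ∈ A, crRel G i x y ↔ crRel G j x y) (hx : x ∈ A) (hy : y ∈ A)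
    (hcnt : ∀ w, nbrCount G i x w = nbrCount G i y w) :
    ∀ w, nbrCount G j x w = nbrCount G j y w := by
  intro w
  by_cases hw : ∃ z ∈ A, crRel G j z w
  · obtain ⟨z, hz, hzw⟩ := hw
    have hcl : ∀ t, crRel G j t w ↔ crRel G j t z :=
      fun t => ⟨fun h => h.trans hzw.symm, fun h => h.trans hzw⟩
    rw [nbrCount_congr hcl, nbrCount_congr hcl, ← nbrCount_eq_of_agreeOn hA hij hx hz,
      ← nbrCount_eq_of_agreeOn hA hij hy hz, hcnt]
  · push Not at hw
    rw [nbrCount_eq_zero_of_isAdjClosed hA hx hw, nbrCount_eq_zero_of_isAdjClosed hA hy hw]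

theorem crRel_succ_iff_of_agreeOn (hA : IsAdjClosed G A)
    (hij : ∀ x ∈ A, ∀ y ∈ A, crRel G i x y ↔ crRel G j x y) (hx : x ∈ A) (hy : y ∈ A) :
    crRel G (i + 1) x y ↔ crRel G (j + 1) x y :=
  and_congr (hij x hx y hy)
    ⟨forall_nbrCount_eq_of_agreeOn hA hij hx hy,
      forall_nbrCount_eq_of_agreeOn hA (fun a ha b hb => (hij a ha b hb).symm) hx hy⟩

theorem crRel_iff_of_stableOn (hA : IsAdjClosed G A)
    (hst : ∀ x ∈ A, ∀ y ∈ A, crRel G (i + 1) x y ↔ crRel G i x y) (hik : i ≤ k) :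
    ∀ x ∈ A, ∀ y ∈ A, crRel G k x y ↔ crRel G i x y := by
  induction k, hik using Nat.le_induction with
  | base => exact fun _ _ _ _ => Iff.rfl
  | succ k _ ih =>
    exact fun x hx y hy => (crRel_succ_iff_of_agreeOn hA ih hx hy).trans (hst x hx y hy)

theorem IsLongRefinement.crDiscreteOn [Fintype V] [Nonempty V] (h : IsLongRefinement G)
    (hA : IsAdjClosed G A) : CrDiscreteOn G (A.ncard - 1) A := by
  by_contra hnd
  obtain ⟨x₀, hx₀⟩ : A.Nonempty := by
    by_contra hA0
    exact hnd fun x hx => absurd ⟨x, hx⟩ hA0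
  let r : ℕ → Setoid A := fun j => (crSetoid G j).comap (↑)
  have hstrict : ∀ j < A.ncard - 1, r (j + 1) ≠ r j := by
    intro j hj hrj
    have hst := crRel_iff_of_stableOn hA (i := j) (k := Fintype.card V - 1 + j)
      (fun x hx y hy => Setoid.ext_iff.1 hrj ⟨x, hx⟩ ⟨y, hy⟩) (by omega)
    exact hnd fun x hx y hy hxy => h.eq_of_crRel
      (((hst x hx y hy).2 (hxy.of_le (by omega))).of_le (by omega))
  have hcount := Setoid.card_quotient_add_le (r := r)
    (fun _ _ hab _ _ hxy => crSetoid_antitone G hab hxy) hstrict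
  have : Nonempty (Quotient (r 0)) := ⟨Quotient.mk _ ⟨x₀, hx₀⟩⟩
  have hpos : 0 < Nat.card (Quotient (r 0)) := Nat.card_pos
  have hle : Nat.card (Quotient (r (A.ncard - 1))) ≤ Nat.card A :=
    Nat.card_le_card_of_surjective _ Quotient.mk_surjective
  rw [Nat.card_coe_set_eq] at hle
  refine hnd fun x hx y hy hxy => congrArg Subtype.val
    (Setoid.eq_of_card_quotient_eq (s := r (A.ncard - 1)) (x := ⟨x, hx⟩) (y := ⟨y, hy⟩) ?_ hxy)
  rw [Nat.card_coe_set_eq]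
  omega

end AdjClosed

section Automorphisms

variable {G : SimpleGraph V} {A : Set V}

theorem IsAdjClosed.exists_iso_extend (hA : IsAdjClosed G A) (f : Equiv.Perm A)
    (hf : ∀ x y : A, G.Adj (f x) (f y) ↔ G.Adj x y) : ∃ σ : G ≃g G, ∀ x : A, σ x = f x := by
  classical
  have hmem (x : V) : Equiv.Perm.ofSubtype f x ∈ A ↔ x ∈ A :=
    Equiv.Perm.ofSubtype_apply_mem_iff_mem f x
  refine ⟨⟨Equiv.Perm.ofSubtype f, @fun x y => ?_⟩, Equiv.Perm.ofSubtype_apply_coe f⟩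
  change G.Adj (Equiv.Perm.ofSubtype f x) (Equiv.Perm.ofSubtype f y) ↔ G.Adj x y
  by_cases hx : x ∈ A <;> by_cases hy : y ∈ A
  · rw [Equiv.Perm.ofSubtype_apply_of_mem f hx, Equiv.Perm.ofSubtype_apply_of_mem f hy]
    exact hf ⟨x, hx⟩ ⟨y, hy⟩
  · exact iff_of_false (hA.not_adj ((hmem x).2 hx) (mt (hmem y).1 hy)) (hA.not_adj hx hy)
  · exact iff_of_false (hA.compl.not_adj (mt (hmem x).1 hx) (not_not.2 ((hmem y).2 hy)))
      (hA.compl.not_adj hx (not_not.2 hy))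
  · rw [Equiv.Perm.ofSubtype_apply_of_not_mem f hx, Equiv.Perm.ofSubtype_apply_of_not_mem f hy]

theorem IsAdjClosed.exists_iso_rev {s : ℕ} (hA : IsAdjClosed G A) (e : Fin s ≃ A)
    (he : ∀ j l, G.Adj (e j) (e l) ↔ (j : ℕ) + 1 = l ∨ (l : ℕ) + 1 = j) :
    ∃ σ : G ≃g G, ∀ j, σ (e j) = e j.rev := by
  obtain ⟨σ, hσ⟩ := hA.exists_iso_extend (e.permCongr Fin.revPerm) fun x y => by
    obtain ⟨j, rfl⟩ := e.surjective x
    obtain ⟨l, rfl⟩ := e.surjective y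
    simp only [Equiv.permCongr_apply, Equiv.symm_apply_apply, Fin.revPerm_apply, he,
      Fin.val_rev]
    omega
  exact ⟨σ, fun j => by simp [hσ]⟩

end Automorphisms

section Splitting

variable {G : SimpleGraph V} {A : Set V} {i j l s T : ℕ} {u v u' v' x : V}

def pairedPart (G : SimpleGraph V) (A : Set V) (i : ℕ) : Set V :=
  {x | x ∈ A ∧ ∃ y ∉ A, crRel G i x y}

theorem pairedPart_anti (hij : i ≤ j) : pairedPart G A j ⊆ pairedPart G A i :=
  fun _ ⟨hx, y, hy, hxy⟩ => ⟨hx, y, hy, hxy.of_le hij⟩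

/-- Under these hypotheses every colour class is a singleton or a pair meeting both `A` and `Aᶜ`,
so the classes correspond to the vertices outside `pairedPart G A i`. -/
theorem card_quotient_add_ncard_pairedPart [Finite V] (hdA : CrDiscreteOn G i A)
    (hdB : CrDiscreteOn G i Aᶜ) :
    Nat.card (Quotient (crSetoid G i)) + (pairedPart G A i).ncard = Nat.card V := by
  let f : ↥(pairedPart G A i)ᶜ → Quotient (crSetoid G i) := fun x => Quotient.mk _ x
  have hinj : Injective f := by
    rintro ⟨x, hx⟩ ⟨y, hy⟩ hxy
    have hxy : crRel G i x y := Quotient.exact hxy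
    refine Subtype.ext ?_
    by_cases hxA : x ∈ A <;> by_cases hyA : y ∈ A
    · exact hdA hxA hyA hxy
    · exact absurd ⟨hxA, y, hyA, hxy⟩ hx
    · exact absurd ⟨hyA, x, hxA, hxy.symm⟩ hy
    · exact hdB hxA hyA hxy
  have hsurj : Surjective f := by
    rintro ⟨z⟩
    by_cases hz : z ∈ pairedPart G A i
    · obtain ⟨-, y, hy, hzy⟩ := hz
      exact ⟨⟨y, fun h => hy h.1⟩, Quotient.sound hzy.symm⟩
    · exact ⟨⟨z, hz⟩, rfl⟩
  rw [← Nat.card_congr (Equiv.ofBijective f ⟨hinj, hsurj⟩), Nat.card_coe_set_eq,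
    Set.ncard_compl_add_ncard]

theorem IsLongRefinement.ncard_pairedPart [Fintype V] [Nonempty V] (h : IsLongRefinement G)
    (hdA : CrDiscreteOn G i A) (hdB : CrDiscreteOn G i Aᶜ) (hi : i ≤ Fintype.card V - 1) :
    (pairedPart G A i).ncard = Fintype.card V - 1 - i := by
  have := card_quotient_add_ncard_pairedPart hdA hdB
  rw [h.card_quotient_crSetoid hi, Nat.card_eq_fintype_card] at this
  omega

structure SplitsPair (G : SimpleGraph V) (i : ℕ) (u v : V) : Prop where
  crRel_iff : ∀ x, crRel G i x u ↔ x = u ∨ x = v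
  crRel_succ_left_iff : ∀ x, crRel G (i + 1) x u ↔ x = u
  crRel_succ_right_iff : ∀ x, crRel G (i + 1) x v ↔ x = v
  crRel_succ_iff_of_ne : ∀ w, w ≠ u → w ≠ v → ∀ x, crRel G (i + 1) x w ↔ crRel G i x w

theorem crRel_succ_of_pairedPart_diff (hdB : CrDiscreteOn G i Aᶜ)
    (hu : pairedPart G A i \ pairedPart G A (i + 1) = {u}) {a b : V} (ha : a ∈ A) (hb : b ∉ A)
    (hab : crRel G i a b) (hau : a ≠ u) : crRel G (i + 1) a b := by
  have hmem : a ∈ pairedPart G A (i + 1) := by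
    by_contra hn
    exact hau (Set.eq_of_mem_singleton (hu ▸ ⟨⟨ha, b, hb, hab⟩, hn⟩))
  obtain ⟨-, b', hb', hab'⟩ := hmem
  rwa [hdB hb' hb ((hab'.of_le i.le_succ).symm.trans hab)] at hab'

theorem splitsPair_of_pairedPart_diff (hdA : CrDiscreteOn G i A) (hdB : CrDiscreteOn G i Aᶜ)
    (hu : pairedPart G A i \ pairedPart G A (i + 1) = {u}) (hv : v ∉ A) (huv : crRel G i u v) :
    SplitsPair G i u v := by
  have huP : u ∈ pairedPart G A i \ pairedPart G A (i + 1) := hu ▸ rfl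
  have huA : u ∈ A := huP.1.1
  have hu_succ (y : V) (hy : y ∉ A) : ¬ crRel G (i + 1) u y := fun h => huP.2 ⟨huA, y, hy, h⟩
  have hclass (x : V) : crRel G i x u ↔ x = u ∨ x = v := by
    refine ⟨fun hx => ?_, by rintro (rfl | rfl) <;> [exact crRel_refl G i x; exact huv.symm]⟩
    by_cases hxA : x ∈ A
    · exact .inl (hdA hxA huA hx)
    · exact .inr (hdB hxA hv (hx.trans huv))
  refine ⟨hclass, fun x => ⟨fun hx => ?_, by rintro rfl; exact crRel_refl G _ x⟩,
    fun x => ⟨fun hx => ?_, by rintro rfl; exact crRel_refl G _ x⟩, fun w hwu hwv x => ?_⟩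
  · by_cases hxA : x ∈ A
    · exact hdA hxA huA (hx.of_le i.le_succ)
    · exact absurd hx.symm (hu_succ x hxA)
  · by_cases hxA : x ∈ A
    · obtain rfl := hdA hxA huA ((hx.of_le i.le_succ).trans huv.symm)
      exact absurd hx (hu_succ v hv)
    · exact hdB hxA hv (hx.of_le i.le_succ)
  · refine ⟨fun h => h.of_le i.le_succ, fun hxw => ?_⟩
    by_cases hxA : x ∈ A <;> by_cases hwA : w ∈ A
    · rw [hdA hxA hwA hxw]; exact crRel_refl G _ w
    · refine crRel_succ_of_pairedPart_diff hdB hu hxA hwA hxw fun hxu => hwv ?_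
      exact ((hclass w).1 (hxu ▸ hxw.symm)).resolve_left hwu
    · exact (crRel_succ_of_pairedPart_diff hdB hu hwA hxA hxw.symm hwu).symm
    · rw [hdB hxA hwA hxw]; exact crRel_refl G _ w

/-- If `{u, v}` splits in round `i + 1`, the pair `{u', v'}` can only split in round `i + 2`
because `u'` sees `u` and `v'` sees `v`. -/
theorem SplitsPair.adj_of_succ (hA : IsAdjClosed G A) (h : SplitsPair G i u v)
    (h' : SplitsPair G (i + 1) u' v') (hu : u ∈ A) (hv : v ∉ A) (hu' : u' ∈ A) (hv' : v' ∉ A) :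
    G.Adj u' u := by
  classical
  have hrel : crRel G (i + 1) u' v' := ((h'.crRel_iff v').2 (.inr rfl)).symm
  have hsplit : ¬ crRel G (i + 2) u' v' := fun hs =>
    hv' (((h'.crRel_succ_left_iff v').1 hs.symm) ▸ hu')
  have hu'v : ¬ G.Adj u' v := hA.not_adj hu' hv
  have hv'u : ¬ G.Adj v' u := hA.compl.not_adj hv' (not_not.2 hu)
  obtain ⟨w, hw⟩ : ∃ w, nbrCount G (i + 1) u' w ≠ nbrCount G (i + 1) v' w := by
    by_contra! hall
    exact hsplit ⟨hrel, hall⟩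
  have hsingle_u (z : V) := nbrCount_eq_ite (G := G) (u := z) fun x _ => h.crRel_succ_left_iff x
  have hsingle_v (z : V) := nbrCount_eq_ite (G := G) (u := z) fun x _ => h.crRel_succ_right_iff x
  by_cases hwu : w = u
  · subst hwu
    rw [hsingle_u, hsingle_u, if_neg hv'u] at hw
    by_contra hn
    exact hw (if_neg hn)
  by_cases hwv : w = v
  · subst hwv
    rw [hsingle_v, hsingle_v, if_neg hu'v] at hw
    have hvv : G.Adj v' w := by
      by_contra hn
      exact hw (if_neg hn).symm
    have hcnt := (crRel_succ_iff.1 hrel).2 u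
    rw [nbrCount_eq_ite (a := u) fun x hx => (h.crRel_iff x).trans
        (or_iff_left fun hxv => hu'v (hxv ▸ hx)),
      nbrCount_eq_ite (a := w) fun x hx => (h.crRel_iff x).trans
        (or_iff_right fun hxu => hv'u (hxu ▸ hx)), if_pos hvv] at hcnt
    by_contra hn
    rw [if_neg hn] at hcnt
    exact absurd hcnt zero_ne_one
  · have hcl := h.crRel_succ_iff_of_ne w hwu hwv
    rw [nbrCount_congr hcl, nbrCount_congr hcl] at hw
    exact absurd ((crRel_succ_iff.1 hrel).2 w) hw

theorem SplitsPair.not_adj (hA : IsAdjClosed G A) (h : SplitsPair G i u v) (hu : u ∈ A)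
    (hv' : v' ∉ A) (h' : crRel G (i + 2) u' v') : ¬ G.Adj u' u := by
  classical
  have hcnt := (crRel_succ_iff.1 h').2 u
  rw [nbrCount_eq_ite fun x _ => h.crRel_succ_left_iff x,
    nbrCount_eq_ite fun x _ => h.crRel_succ_left_iff x,
    if_neg (hA.compl.not_adj hv' (not_not.2 hu))] at hcnt
  intro hadj
  rw [if_pos hadj] at hcnt
  exact absurd hcnt one_ne_zero

end Splitting

section Path

variable {G : SimpleGraph V} {A : Set V} {j l s T : ℕ} {u v : ℕ → V}

theorem adj_iff_of_splitsPair (hA : IsAdjClosed G A)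
    (hsp : ∀ j < s, u j ∈ A ∧ v j ∉ A ∧ SplitsPair G (T + j) (u j) (v j))
    (hj : j < s) (hl : l < s) : G.Adj (u j) (u l) ↔ j + 1 = l ∨ l + 1 = j := by
  obtain ⟨huj, hvj, hj'⟩ := hsp j hj
  obtain ⟨hul, hvl, hl'⟩ := hsp l hl
  have hrel {m : ℕ} (hm : m < s) {k : ℕ} (hk : k ≤ T + m) : crRel G k (u m) (v m) :=
    ((((hsp m hm).2.2.crRel_iff (v m)).2 (.inr rfl)).symm).of_le hk
  refine ⟨fun hadj => ?_, ?_⟩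
  · by_contra hne
    rcases lt_trichotomy j l with hjl | rfl | hjl
    · exact hj'.not_adj hA huj hvl (hrel hl (by omega)) hadj.symm
    · exact G.loopless.irrefl _ hadj
    · exact hl'.not_adj hA hul hvj (hrel hj (by omega)) hadj
  · rintro (rfl | rfl)
    · exact (hj'.adj_of_succ hA hl' huj hvj hul hvl).symm
    · exact hl'.adj_of_succ hA hj' hul hvl huj hvj

theorem exists_equiv_of_splitsPair [Finite V] (hA : IsAdjClosed G A) (hs : A.ncard = s)
    (hsp : ∀ j < s, u j ∈ A ∧ v j ∉ A ∧ SplitsPair G (T + j) (u j) (v j)) :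
    ∃ e : Fin s ≃ A, ∀ j l, G.Adj (e j) (e l) ↔ (j : ℕ) + 1 = l ∨ (l : ℕ) + 1 = j := by
  have hinj {j l : ℕ} (hjl : j < l) (hl : l < s) : u j ≠ u l := by
    intro heq
    obtain ⟨huj, -, hj'⟩ := hsp j (hjl.trans hl)
    obtain ⟨-, hvl, hl'⟩ := hsp l hl
    have hvu : crRel G (T + j + 1) (v l) (u j) :=
      heq ▸ ((hl'.crRel_iff (v l)).2 (.inr rfl)).of_le (by omega)
    exact hvl ((hj'.crRel_succ_left_iff _).1 hvu ▸ huj)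
  let f : Fin s → A := fun j => ⟨u j, (hsp j j.2).1⟩
  have hf : Injective f := fun j l hjl => by
    have hjl : u j = u l := congrArg Subtype.val hjl
    rcases lt_trichotomy (j : ℕ) l with h | h | h
    · exact absurd hjl (hinj h l.2)
    · exact Fin.ext h
    · exact absurd hjl.symm (hinj h j.2)
  refine ⟨Equiv.ofBijective f (hf.bijective_of_nat_card_le ?_), fun j l =>
    adj_iff_of_splitsPair hA hsp j.2 l.2⟩
  rw [Nat.card_coe_set_eq, hs, Nat.card_fin]

end Path

section Main

variable [Fintype V] [Nonempty V] {G : SimpleGraph V} {A : Set V}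

theorem IsLongRefinement.exists_splitsPair (h : IsLongRefinement G) (hA : IsAdjClosed G A)
    (hle : A.ncard ≤ Aᶜ.ncard) : ∃ u v : ℕ → V, ∀ j < A.ncard,
      u j ∈ A ∧ v j ∉ A ∧ SplitsPair G (Aᶜ.ncard - 1 + j) (u j) (v j) := by
  set T := Aᶜ.ncard - 1
  have hn : A.ncard + Aᶜ.ncard = Fintype.card V := by
    rw [Set.ncard_add_ncard_compl, Nat.card_eq_fintype_card]
  have hdA : CrDiscreteOn G T A := (h.crDiscreteOn hA).mono (by omega)
  have hdB : CrDiscreteOn G T Aᶜ := h.crDiscreteOn hA.compl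
  have hP {j : ℕ} (hj : j ≤ A.ncard) (hB : 0 < Aᶜ.ncard) :
      (pairedPart G A (T + j)).ncard = A.ncard - j := by
    rw [h.ncard_pairedPart (hdA.mono le_self_add) (hdB.mono le_self_add) (by omega)]
    omega
  have hex : ∀ j < A.ncard, ∃ u v, u ∈ A ∧ v ∉ A ∧ SplitsPair G (T + j) u v := by
    intro j hj
    have hsub : pairedPart G A (T + (j + 1)) ⊆ pairedPart G A (T + j) :=
      pairedPart_anti (by omega)
    obtain ⟨u, hu⟩ := Set.ncard_eq_one.1 (by
      rw [Set.ncard_sdiff hsub, hP hj.le (by omega), hP (j := j + 1) hj (by omega)]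
      omega)
    obtain ⟨⟨huA, v, hv, huv⟩, -⟩ : u ∈ pairedPart G A (T + j) \ pairedPart G A (T + (j + 1)) :=
      hu ▸ rfl
    exact ⟨u, v, huA, hv,
      splitsPair_of_pairedPart_diff (hdA.mono le_self_add) (hdB.mono le_self_add) hu hv huv⟩
  choose! u v huv using hex
  exact ⟨u, v, huv⟩

theorem IsLongRefinement.ncard_le_one_of_isAdjClosed (h : IsLongRefinement G)
    (hA : IsAdjClosed G A) (hle : A.ncard ≤ Aᶜ.ncard) : A.ncard ≤ 1 := by
  by_contra! hA2
  obtain ⟨u, v, hsp⟩ := h.exists_splitsPair hA hle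
  obtain ⟨e, he⟩ := exists_equiv_of_splitsPair hA rfl hsp
  obtain ⟨σ, hσ⟩ := hA.exists_iso_rev e he
  let j₀ : Fin A.ncard := ⟨0, by omega⟩
  have hfix := h.eq_of_crRel (crRel_apply_self σ _ (e j₀))
  rw [hσ] at hfix
  have := Fin.val_eq_of_eq (e.injective (Subtype.ext hfix))
  simp only [Fin.val_rev, j₀] at this
  omega

theorem IsLongRefinement.not_isAdjClosed_singleton (h : IsLongRefinement G)
    (hn : 2 ≤ Fintype.card V) (x : V) : ¬ IsAdjClosed G {x} := by
  intro hx
  have hcompl : ({x}ᶜ : Set V).ncard = Fintype.card V - 1 := by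
    rw [Set.ncard_compl, Set.ncard_singleton, Nat.card_eq_fintype_card]
  obtain ⟨y, hyx, hy⟩ : ∃ y ≠ x, ∀ z, ¬ G.Adj y z := by
    rcases hn.eq_or_lt with hn2 | hn3
    · obtain ⟨y, hy⟩ := Set.ncard_eq_one.1 (by omega : ({x}ᶜ : Set V).ncard = 1)
      have hyx : y ∈ ({x}ᶜ : Set V) := hy ▸ rfl
      exact ⟨y, hyx, (hy ▸ hx.compl).isolated_of_eq_singleton⟩
    · obtain ⟨u, v, hsp⟩ := h.exists_splitsPair hx (by rw [Set.ncard_singleton]; omega)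
      obtain ⟨hu, hv, hsplit⟩ := hsp 0 (by simp)
      rw [Set.mem_singleton_iff.1 hu] at hsplit
      have hxv : crRel G 1 x (v 0) :=
        (((hsplit.crRel_iff (v 0)).2 (.inr rfl)).symm).of_le (by omega)
      exact ⟨v 0, hv, isolated_of_crRel_one hx.isolated_of_eq_singleton hxv⟩
  exact hyx (h.eq_of_crRel (crRel_of_isolated hy hx.isolated_of_eq_singleton _))

end Main

/-- Every long-refinement graph on at least two vertices is connected. -/
theorem longRefinement_connected [Fintype V] (G : SimpleGraph V)
    (h : IsLongRefinement G) (hn : 2 ≤ Fintype.card V) :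
    G.Connected := by
  have : Nonempty V := Fintype.card_pos_iff.1 (by omega)
  refine ⟨fun x y => by_contra fun hxy => ?_⟩
  obtain ⟨A, hA, hAne, hle⟩ := exists_isAdjClosed_ncard_le_compl hxy
  obtain ⟨z, rfl⟩ := Set.ncard_eq_one.1
    ((h.ncard_le_one_of_isAdjClosed hA hle).antisymm hAne.ncard_pos)
  exact h.not_isAdjClosed_singleton hn z hA
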